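/- arXiv:1903.06205 — 3 statements merged into one kernel-verified Lean document; each statement's English description precedes it below -/
import Mathlib

section
/- For 0 < β < 1, the n×n matrix K̄(β) with entries K̄(β)_{kq} = β^{max(k,q)} (indices k,q from 1 to n) is symmetric positive definite. -/
/-!
With `a j = β ^ (j + 1)`, telescoping `a m = ∑_{m ≤ j < n} (a j - a (j + 1)) + a n` writes the
kernel `a (max k q)` as `Lᵀ D L + a n • J`, with `J` the all-ones matrix, `L` the matrix of ones
on and below the diagonal and `D = diagonal (a j - a (j + 1))`. Since `a` strictly decreases, `D`
is positive definite, so is its congruence by the invertible `L`, and adding the positive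
semidefinite rank-one term keeps it so.
-/

open Finset Matrix

theorem Fin.sum_ite_le_sub_succ {G : Type*} [AddCommGroup G] (a : ℕ → G) {m n : ℕ} (h : m ≤ n) :
    ∑ j : Fin n, (if m ≤ (j : ℕ) then a j - a (j + 1) else 0) = a m - a n := by
  rw [Fin.sum_univ_eq_sum_range (fun j => if m ≤ j then a j - a (j + 1) else 0), ← sum_filter,
    range_eq_Ico, Ico_filter_le, max_eq_right (Nat.zero_le m), ← neg_sub, ← sum_Ico_sub (f := a) h,
    ← sum_neg_distrib]
  simp only [neg_sub]

namespace Matrix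

def lowerOnes (R : Type*) [Zero R] [One R] (n : ℕ) : Matrix (Fin n) (Fin n) R :=
  of fun i j => if j ≤ i then 1 else 0

variable {R : Type*}

lemma det_lowerOnes [CommRing R] (n : ℕ) : (lowerOnes R n).det = 1 := by
  rw [det_of_isLowerTriangular]
  · simp [lowerOnes]
  · intro i j hij
    exact if_neg (not_le.2 hij)

lemma mulVec_lowerOnes_injective [Field R] (n : ℕ) : Function.Injective (lowerOnes R n).mulVec :=
  mulVec_injective_iff_isUnit.2 (by simp [isUnit_iff_isUnit_det, det_lowerOnes])

lemma of_max_eq_conjTranspose_mul_diagonal_mul_add [CommRing R] [StarRing R] [TrivialStar R]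
    (n : ℕ) (a : ℕ → R) :
    of (fun k q : Fin n => a (max (k : ℕ) q)) =
      (lowerOnes R n)ᴴ * diagonal (fun j : Fin n => a j - a (j + 1)) * lowerOnes R n +
        of fun _ _ => a n := by
  ext k q
  have hm : max (k : ℕ) q ≤ n := max_le k.2.le q.2.le
  rw [add_apply, of_apply, of_apply, ← sub_eq_iff_eq_add, ← Fin.sum_ite_le_sub_succ a hm, mul_apply]
  simp only [mul_diagonal, conjTranspose_apply, lowerOnes, of_apply, star_trivial,
    max_le_iff, Fin.le_def]
  refine sum_congr rfl fun j _ => ?_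
  split_ifs <;> simp_all

lemma posSemidef_of_const {ι : Type*} [Fintype ι] {c : ℝ} (hc : 0 ≤ c) :
    (of fun _ _ : ι => c).PosSemidef := by
  convert (posSemidef_vecMulVec_self_star (1 : ι → ℝ)).smul hc
  ext
  simp

theorem posDef_of_max_of_strictAnti {n : ℕ} {a : ℕ → ℝ} (ha : StrictAnti a) (han : 0 ≤ a n) :
    (of fun k q : Fin n => a (max (k : ℕ) q)).PosDef := by
  rw [of_max_eq_conjTranspose_mul_diagonal_mul_add]
  refine PosDef.add_posSemidef ?_ (posSemidef_of_const han)
  refine PosDef.conjTranspose_mul_mul_same ?_ (mulVec_lowerOnes_injective n)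
  exact posDef_diagonal_iff.2 fun j => sub_pos.2 (ha j.1.lt_add_one)

end Matrix

/-- For `0 < β < 1`, the TC kernel matrix `K̄(β)` with entries `β^{max(k,q)}`
(indices `1,…,n`) is symmetric positive definite. -/
theorem stmt3 {n : ℕ} (β : ℝ) (hβ0 : 0 < β) (hβ1 : β < 1) :
    (Matrix.of fun k q : Fin n => β ^ (max (k.1 + 1) (q.1 + 1))).PosDef := by
  simp_rw [Nat.add_max_add_right]
  exact posDef_of_max_of_strictAnti (a := fun j => β ^ (j + 1))
    ((pow_right_strictAnti₀ hβ0 hβ1).comp_strictMono add_left_strictMono) (by positivity)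
end

section
/- For 0 < β < 1 and n ≥ 2, the inverse of the n×n matrix K̄(β) with entries β^{max(k,q)} is tridiagonal; explicitly, (K̄(β)⁻¹)_{kq} = 0 whenever |k − q| ≥ 2. -/
/-!
Write `d j = a j - a (j + 1)` and let `r j` be the rows of the kernel `(a (max i j))`. Then
`r j - r (j + 1)` is `d j` times the indicator of the coordinates `≤ j`, so
`d (k - 1) • (r k - r (k + 1)) - d k • (r (k - 1) - r k) = d (k - 1) * d k • e k`
(and `r 0 - r 1 = d 0 • e 0`). Thus `e k` is a combination of the rows `k - 1, k, k + 1`,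
which makes row `k` of the inverse vanish outside those columns; symmetry does the rest.
-/

open Matrix

theorem Matrix.inv_apply_eq_zero_of_vecMul_eq_single {ι K : Type*} [Fintype ι] [DecidableEq ι]
    [Field K] {A : Matrix ι ι K} {x : ι → K} {k q : ι} {c : K} (hc : c ≠ 0)
    (hx : x ᵥ* A = Pi.single k c) (hxq : x q = 0) : A⁻¹ k q = 0 := by
  by_cases hA : IsUnit A.det
  · have hrow : Pi.single k c ᵥ* A⁻¹ = x := by
      rw [← hx, vecMul_vecMul, mul_nonsing_inv A hA, vecMul_one]
    have := congrFun hrow q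
    rw [single_vecMul, Pi.smul_apply, row_apply, smul_eq_mul, hxq] at this
    exact (mul_eq_zero.mp this).resolve_left hc
  · rw [nonsing_inv_apply_not_isUnit A hA, zero_apply]

/-- With `a j = β ^ (j + 1)` this is the TC kernel `K̄(β)`, indexed from `0`. -/
def Matrix.maxKernel {R : Type*} (n : ℕ) (a : ℕ → R) : Matrix (Fin n) (Fin n) R :=
  of fun i j => a (max i.1 j.1)

namespace Matrix.maxKernel

variable {R : Type*} {n : ℕ}

theorem isSymm (a : ℕ → R) : (maxKernel n a).IsSymm := by
  ext i j
  simp [maxKernel, max_comm]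

theorem vecMul_sub_single_succ [CommRing R] (a : ℕ → R) (k : ℕ) (hk : k + 1 < n) :
    (Pi.single (⟨k, by omega⟩ : Fin n) 1 - Pi.single ⟨k + 1, hk⟩ 1) ᵥ* maxKernel n a =
      fun j => if j.1 ≤ k then a k - a (k + 1) else 0 := by
  funext j
  simp only [sub_vecMul, single_one_vecMul, Pi.sub_apply, row_apply, maxKernel, of_apply]
  split_ifs with hj
  · rw [max_eq_left hj, max_eq_left (by omega)]
  · rw [max_eq_right (by omega), max_eq_right (by omega), sub_self]

variable {K : Type*} [Field K]

theorem inv_apply_eq_zero_of_add_two_le (a : ℕ → K) (ha : ∀ j, a j ≠ a (j + 1)) {k q : Fin n}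
    (hkq : k.1 + 2 ≤ q.1) : (maxKernel n a)⁻¹ k q = 0 := by
  obtain ⟨k, hk⟩ := k
  dsimp only at hkq
  rcases k with _ | m
  · refine inv_apply_eq_zero_of_vecMul_eq_single (sub_ne_zero.mpr (ha 0))
      (x := Pi.single ⟨0, hk⟩ 1 - Pi.single ⟨1, by omega⟩ 1) ?_ ?_
    · rw [vecMul_sub_single_succ a 0 (by omega)]
      funext j
      by_cases hj : j.1 = 0 <;> simp [hj, Pi.single_apply, Fin.ext_iff]
    · have : q.1 ≠ 0 ∧ q.1 ≠ 1 := by omega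
      simp [Fin.ext_iff, this]
  · have hc : (a m - a (m + 1)) * (a (m + 1) - a (m + 2)) ≠ 0 :=
      mul_ne_zero (sub_ne_zero.mpr (ha m)) (sub_ne_zero.mpr (ha (m + 1)))
    refine inv_apply_eq_zero_of_vecMul_eq_single hc
      (x := (a m - a (m + 1)) • (Pi.single ⟨m + 1, hk⟩ 1 - Pi.single ⟨m + 2, by omega⟩ 1) -
        (a (m + 1) - a (m + 2)) • (Pi.single ⟨m, by omega⟩ 1 - Pi.single ⟨m + 1, hk⟩ 1)) ?_ ?_
    · rw [sub_vecMul, smul_vecMul, smul_vecMul, vecMul_sub_single_succ a (m + 1) (by omega),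
        vecMul_sub_single_succ a m hk]
      funext j
      simp only [Pi.sub_apply, Pi.smul_apply, smul_eq_mul, Pi.single_apply, Fin.ext_iff]
      rcases lt_trichotomy j.1 (m + 1) with hj | hj | hj
      · rw [if_pos hj.le, if_pos (Nat.lt_succ_iff.mp hj), if_neg hj.ne]
        ring
      · simp [hj]
      · simp [hj.ne', show ¬ j.1 ≤ m + 1 by omega, show ¬ j.1 ≤ m by omega]
    · have : q.1 ≠ m ∧ q.1 ≠ m + 1 ∧ q.1 ≠ m + 2 := by omega
      simp [Fin.ext_iff, this]

theorem inv_apply_eq_zero (a : ℕ → K) (ha : ∀ j, a j ≠ a (j + 1)) {k q : Fin n}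
    (hkq : 2 ≤ |(k.1 : ℤ) - q.1|) : (maxKernel n a)⁻¹ k q = 0 := by
  rcases le_abs'.mp hkq with h | h
  · exact inv_apply_eq_zero_of_add_two_le a ha (by omega)
  · rw [← (isSymm a).inv.apply]
    exact inv_apply_eq_zero_of_add_two_le a ha (by omega)

end Matrix.maxKernel

theorem stmt15_general {n : ℕ} (β : ℝ) (hβ0 : 0 < β) (hβ1 : β < 1) :
    ∀ k q : Fin n, 2 ≤ |(k.1 : ℤ) - (q.1 : ℤ)| →
      (Matrix.of fun k q : Fin n => β ^ (max (k.1 + 1) (q.1 + 1)))⁻¹ k q = 0 := by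
  have hK : (Matrix.of fun k q : Fin n => β ^ (max (k.1 + 1) (q.1 + 1))) =
      maxKernel n (fun j => β ^ (j + 1)) := by
    ext k q
    simp [maxKernel, max_add_add_right]
  have hβ : ∀ j, β ^ (j + 1) ≠ β ^ (j + 1 + 1) := fun j =>
    (pow_right_strictAnti₀ hβ0 hβ1 (Nat.lt_succ_self (j + 1))).ne'
  intro k q hkq
  rw [hK]
  exact maxKernel.inv_apply_eq_zero _ hβ hkq

/-- For `0 < β < 1` and `n ≥ 2`, the inverse of the TC kernel matrix
`K̄(β)` with entries `β^{max(k,q)}` is tridiagonal: `(K̄(β)⁻¹)_{kq} = 0` if `|k-q| ≥ 2`. -/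
theorem stmt15 {n : ℕ} (hn : 2 ≤ n) (β : ℝ) (hβ0 : 0 < β) (hβ1 : β < 1) :
    ∀ k q : Fin n, 2 ≤ |(k.1 : ℤ) - (q.1 : ℤ)| →
      (Matrix.of fun k q : Fin n => β ^ (max (k.1 + 1) (q.1 + 1)))⁻¹ k q = 0 :=
  stmt15_general β hβ0 hβ1
end

section
/- Let f(θ) = (1/2)‖w − Aθ‖² + δ·√(θᵀ K⁻¹ θ) with δ > 0 and K positive definite, for θ ∈ ℝ^n. Then θ = 0 is a minimizer of f if and only if ‖K^{1/2} Aᵀ w‖₂ ≤ δ. -/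
/-!
Expanding the square, `f θ - f 0 = -⟪Aᵀw, θ⟫ + ½‖Aθ‖² + δ √(θᵀK⁻¹θ)`. Since `S = K^{1/2}` is
symmetric and invertible with `S K⁻¹ S = 1`, the substitution `θ = Sψ` turns the penalty into
`δ‖ψ‖` and the linear term into `⟪v, ψ⟫` with `v = S Aᵀ w`. Then `‖v‖ ≤ δ` suffices by
Cauchy–Schwarz, and it is necessary: along `ψ = t v` the quadratic term is `O(t²)`, so letting
`t → 0⁺` gives `‖v‖² ≤ δ ‖v‖`.
-/

/-- The positive semidefinite square root of a positive semidefinite matrix, as defined in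
the older Mathlib (removed since). -/
noncomputable def Matrix.PosSemidef.sqrt {n 𝕜 : Type*} [Fintype n] [DecidableEq n] [RCLike 𝕜] [PartialOrder 𝕜]
    {A : Matrix n n 𝕜} (hA : A.PosSemidef) : Matrix n n 𝕜 :=
  (hA.1.eigenvectorUnitary : Matrix n n 𝕜) * Matrix.diagonal ((RCLike.ofReal : ℝ → 𝕜) ∘ Real.sqrt ∘ hA.1.eigenvalues) *
    (star hA.1.eigenvectorUnitary : Matrix n n 𝕜)

open Matrix

namespace Matrix.PosSemidef

variable {n 𝕜 : Type*} [Fintype n] [DecidableEq n] [RCLike 𝕜]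

lemma isHermitian_sqrt [PartialOrder 𝕜] {A : Matrix n n 𝕜} (hA : A.PosSemidef) :
    hA.sqrt.IsHermitian := by
  simp only [IsHermitian, sqrt, conjTranspose_mul, diagonal_conjTranspose, star_eq_conjTranspose,
    conjTranspose_conjTranspose, Matrix.mul_assoc]
  congr 3
  ext i
  simp

open scoped ComplexOrder in
lemma sqrt_mul_self {A : Matrix n n 𝕜} (hA : A.PosSemidef) : hA.sqrt * hA.sqrt = A := by
  conv_rhs => rw [hA.1.spectral_theorem, Unitary.conjStarAlgAut_apply]
  simp only [sqrt, Matrix.mul_assoc]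
  rw [← Matrix.mul_assoc (star _ : Matrix _ _ 𝕜) _ _, Unitary.coe_star_mul_self, Matrix.one_mul,
    ← Matrix.mul_assoc (diagonal _), diagonal_mul_diagonal]
  congr 3
  ext i
  simp [← RCLike.ofReal_mul, Real.mul_self_sqrt (hA.eigenvalues_nonneg i)]

end Matrix.PosSemidef

section InnerProductSpace

open Filter Topology
open scoped InnerProductSpace

variable {E F : Type*} [NormedAddCommGroup E] [InnerProductSpace ℝ E]
  [SeminormedAddCommGroup F] [NormedSpace ℝ F]

lemma forall_inner_le_half_sq_add_norm_iff (B : E →ₗ[ℝ] F) (v : E) {δ : ℝ} (hδ : 0 ≤ δ) :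
    (∀ ψ, ⟪v, ψ⟫_ℝ ≤ ‖B ψ‖ ^ 2 / 2 + δ * ‖ψ‖) ↔ ‖v‖ ≤ δ := by
  refine ⟨fun h ↦ ?_, fun h ψ ↦ ?_⟩
  · -- test against `t • v` and let `t → 0⁺`: the quadratic term is `o(t)`
    have hsq : ‖v‖ ^ 2 ≤ δ * ‖v‖ := by
      have hlim : Tendsto (fun t : ℝ ↦ t * (‖B v‖ ^ 2 / 2) + δ * ‖v‖) (𝓝[>] 0)
          (𝓝 (0 * (‖B v‖ ^ 2 / 2) + δ * ‖v‖)) :=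
        tendsto_nhdsWithin_of_tendsto_nhds (by fun_prop : Continuous _).continuousAt.tendsto
      rw [zero_mul, zero_add] at hlim
      refine ge_of_tendsto hlim (eventually_nhdsWithin_of_forall fun t (ht : 0 < t) ↦ ?_)
      have := h (t • v)
      rw [inner_smul_right, real_inner_self_eq_norm_sq, map_smul, norm_smul, norm_smul,
        Real.norm_of_nonneg ht.le] at this
      nlinarith
    rcases (norm_nonneg v).eq_or_lt with hv | hv
    · rw [← hv]; exact hδ
    · nlinarith
  · calc ⟪v, ψ⟫_ℝ ≤ ‖v‖ * ‖ψ‖ := real_inner_le_norm v ψ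
      _ ≤ δ * ‖ψ‖ := by gcongr
      _ ≤ ‖B ψ‖ ^ 2 / 2 + δ * ‖ψ‖ := by linarith [sq_nonneg ‖B ψ‖]

end InnerProductSpace

section DotProduct

open scoped InnerProductSpace

variable {ι κ : Type*} [Fintype ι] [Fintype κ]

lemma dotProduct_self_eq_norm_toLp_sq (x : ι → ℝ) : x ⬝ᵥ x = ‖WithLp.toLp 2 x‖ ^ 2 := by
  rw [← real_inner_self_eq_norm_sq, EuclideanSpace.inner_toLp_toLp, star_trivial]

lemma forall_dotProduct_le_half_add_sqrt_iff (M : Matrix κ ι ℝ) (v : ι → ℝ) {δ : ℝ}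
    (hδ : 0 ≤ δ) :
    (∀ ψ, v ⬝ᵥ ψ ≤ 1 / 2 * ((M *ᵥ ψ) ⬝ᵥ (M *ᵥ ψ)) + δ * √(ψ ⬝ᵥ ψ)) ↔ √(v ⬝ᵥ v) ≤ δ := by
  classical
  simp only [dotProduct_self_eq_norm_toLp_sq, Real.sqrt_sq (norm_nonneg _)]
  rw [← forall_inner_le_half_sq_add_norm_iff (toLpLin 2 2 M) _ hδ, (WithLp.toLp_surjective 2).forall]
  simp only [toLpLin_toLp, toLin'_apply, EuclideanSpace.inner_toLp_toLp, star_trivial,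
    dotProduct_comm _ v, one_div_mul_eq_div]

lemma dotProduct_sub_mulVec_self {R : Type*} [CommRing R] (A : Matrix κ ι R) (w : κ → R)
    (θ : ι → R) :
    (w - A *ᵥ θ) ⬝ᵥ (w - A *ᵥ θ) = w ⬝ᵥ w - 2 * ((Aᵀ *ᵥ w) ⬝ᵥ θ) + (A *ᵥ θ) ⬝ᵥ (A *ᵥ θ) := by
  have h : (A *ᵥ θ) ⬝ᵥ w = (Aᵀ *ᵥ w) ⬝ᵥ θ := by
    rw [dotProduct_comm, dotProduct_mulVec, mulVec_transpose]
  rw [dotProduct_sub, sub_dotProduct, sub_dotProduct, dotProduct_comm w (A *ᵥ θ), h]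
  ring

end DotProduct

lemma Matrix.mul_inv_mul_eq_one_of_mul_self_eq {ι R : Type*} [Fintype ι] [DecidableEq ι]
    [CommRing R] {S K : Matrix ι ι R} (hSK : S * S = K) (hK : IsUnit K) : S * K⁻¹ * S = 1 := by
  have hS : IsUnit S := isUnit_of_mul_isUnit_left (hSK ▸ hK)
  have hdet := (isUnit_iff_isUnit_det S).1 hS
  rw [← hSK, Matrix.mul_inv_rev, Matrix.mul_assoc, Matrix.mul_assoc, nonsing_inv_mul _ hdet,
    Matrix.mul_one, mul_nonsing_inv _ hdet]

/-- Zero-characterization for the kernel-based group Lasso (single group): with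
`f θ = (1/2)‖w - Aθ‖² + δ √(θᵀK⁻¹θ)`, `δ > 0`, `K` positive definite,
`θ = 0` minimizes `f` iff `‖K^{1/2} Aᵀ w‖₂ ≤ δ`. -/
theorem stmt18 {N n : ℕ} (A : Matrix (Fin N) (Fin n) ℝ) (w : Fin N → ℝ)
    (δ : ℝ) (hδ : 0 < δ) (K : Matrix (Fin n) (Fin n) ℝ) (hK : K.PosDef)
    (f : (Fin n → ℝ) → ℝ)
    (hf : ∀ θ, f θ = (1/2) * dotProduct (w - A.mulVec θ) (w - A.mulVec θ)
        + δ * Real.sqrt (dotProduct θ (K⁻¹.mulVec θ))) :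
    (∀ θ, f 0 ≤ f θ) ↔
      Real.sqrt (dotProduct (hK.posSemidef.sqrt.mulVec (A.transpose.mulVec w))
        (hK.posSemidef.sqrt.mulVec (A.transpose.mulVec w))) ≤ δ := by
  set S := hK.posSemidef.sqrt
  have hS : Sᵀ = S := by
    rw [← conjTranspose_eq_transpose_of_trivial]; exact hK.posSemidef.isHermitian_sqrt
  have hSS : S * S = K := hK.posSemidef.sqrt_mul_self
  have hSunit : IsUnit S := isUnit_of_mul_isUnit_left (hSS ▸ hK.isUnit)
  have hSKS : S * K⁻¹ * S = 1 := mul_inv_mul_eq_one_of_mul_self_eq hSS hK.isUnit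
  have hquad (ψ : Fin n → ℝ) : (S *ᵥ ψ) ⬝ᵥ (K⁻¹ *ᵥ (S *ᵥ ψ)) = ψ ⬝ᵥ ψ := by
    rw [mulVec_mulVec, dotProduct_mulVec, ← vecMul_transpose, hS, vecMul_vecMul, ← Matrix.mul_assoc,
      hSKS, vecMul_one]
  have hlin (ψ : Fin n → ℝ) : (Aᵀ *ᵥ w) ⬝ᵥ (S *ᵥ ψ) = (S *ᵥ Aᵀ *ᵥ w) ⬝ᵥ ψ := by
    rw [dotProduct_mulVec, ← mulVec_transpose, hS]
  have hmin (ψ : Fin n → ℝ) : f 0 ≤ f (S *ᵥ ψ) ↔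
      (S *ᵥ Aᵀ *ᵥ w) ⬝ᵥ ψ ≤ 1 / 2 * (((A * S) *ᵥ ψ) ⬝ᵥ ((A * S) *ᵥ ψ)) + δ * √(ψ ⬝ᵥ ψ) := by
    rw [hf, hf, mulVec_zero, sub_zero, zero_dotProduct, Real.sqrt_zero, dotProduct_sub_mulVec_self,
      hquad, hlin, ← mulVec_mulVec]
    constructor <;> intro h <;> linarith
  rw [(mulVec_surjective_iff_isUnit.2 hSunit).forall]
  simp_rw [hmin]
  exact forall_dotProduct_le_half_add_sqrt_iff (A * S) _ hδ.le
end
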